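/- arXiv:2011.00352 — 3 statements merged into one kernel-verified Lean document; each statement's English description precedes it below -/
import Mathlib

section
/- Let A be a finite alphabet and u : ℕ → A a word such that fac(u) is inexhaustible. If fac(u) has an infinite proper initial segment — that is, an infinite subset B ⊊ fac(u) that is downward closed under the factor (infix) relation — then fac(u) contains an infinite antichain with respect to the factor (infix) order (in particular fac(u) is not well-quasi-ordered). -/
open SimpleGraph

/-- An induced path of length `n` in `G`: an injective sequence of `n+1` vertices,
adjacent exactly when consecutive. -/
def IsInducedPath {V : Type*} (G : SimpleGraph V) {n : ℕ} (x : Fin (n + 1) → V) : Prop :=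
  Function.Injective x ∧ ∀ i j, G.Adj (x i) (x j) ↔ Nat.dist i.val j.val = 1

/-- `G` contains finite induced paths of unbounded length. -/
def HasUnboundedPaths {V : Type*} (G : SimpleGraph V) : Prop :=
  ∀ n : ℕ, ∃ x : Fin (n + 1) → V, IsInducedPath G x

/-- `G` is path-minimal. -/
def PathMinimal {V : Type*} (G : SimpleGraph V) : Prop :=
  HasUnboundedPaths G ∧
    ∀ A : Set V, HasUnboundedPaths (G.induce A) → Nonempty (G ↪g G.induce A)

/-- The age of `G` is contained in the age of `H`. -/
def AgeSubset {V W : Type*} (G : SimpleGraph V) (H : SimpleGraph W) : Prop :=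
  ∀ (n : ℕ) (F : SimpleGraph (Fin n)), Nonempty (F ↪g G) → Nonempty (F ↪g H)

/-- The age of `G` contains no infinite antichain for embeddability. -/
def AgeWQO {V : Type*} (G : SimpleGraph V) : Prop :=
  ∀ f : ℕ → Σ n : ℕ, SimpleGraph (Fin n),
    (∀ i, Nonempty ((f i).2 ↪g G)) →
    ∃ i j, i ≠ j ∧ Nonempty ((f i).2 ↪g (f j).2)

/-- The set `A` carries an induced path of length `n` of `G` (covering all of `A`). -/
def IsPathOn {V : Type*} (G : SimpleGraph V) (A : Set V) (n : ℕ) : Prop :=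
  ∃ x : Fin (n + 1) → V, Function.Injective x ∧ Set.range x = A ∧
    ∀ i j, G.Adj (x i) (x j) ↔ Nat.dist i.val j.val = 1

/-- `G` embeds a direct sum of finite induced paths of unbounded length. -/
def EmbedsDirectSumOfPaths {V : Type*} (G : SimpleGraph V) : Prop :=
  ∃ A : ℕ → Set V, (∀ n, (A n).Finite) ∧
    (∀ m n, m ≠ n → Disjoint (A m) (A n)) ∧
    (∀ m n, m ≠ n → ∀ x ∈ A m, ∀ y ∈ A n, ¬ G.Adj x y) ∧
    ∀ n, ∃ m, n ≤ m ∧ IsPathOn G (A n) m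

/-- `G` embeds a complete sum of finite induced paths of unbounded length. -/
def EmbedsCompleteSumOfPaths {V : Type*} (G : SimpleGraph V) : Prop :=
  ∃ A : ℕ → Set V, (∀ n, (A n).Finite) ∧
    (∀ m n, m ≠ n → Disjoint (A m) (A n)) ∧
    (∀ m n, m ≠ n → ∀ x ∈ A m, ∀ y ∈ A n, G.Adj x y) ∧
    ∀ n, ∃ m, n ≤ m ∧ IsPathOn G (A n) m

/-- An isometric path of length `n` in `G`. -/
def IsIsometricPath {V : Type*} (G : SimpleGraph V) {n : ℕ} (x : Fin (n + 1) → V) : Prop :=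
  (∀ i : Fin n, G.Adj (x i.castSucc) (x i.succ)) ∧
  ∀ i j, G.dist (x i) (x j) = Nat.dist i.val j.val

/-- The set `A` carries an induced path of length `n` of `G` which is isometric in `G`. -/
def IsIsometricPathOn {V : Type*} (G : SimpleGraph V) (A : Set V) (n : ℕ) : Prop :=
  ∃ x : Fin (n + 1) → V, Function.Injective x ∧ Set.range x = A ∧
    (∀ i j, G.Adj (x i) (x j) ↔ Nat.dist i.val j.val = 1) ∧
    (∀ i j, G.dist (x i) (x j) = Nat.dist i.val j.val)

/-- The incomparability graph of a poset. -/
def incGraph (α : Type*) [PartialOrder α] : SimpleGraph α where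
  Adj a b := ¬ a ≤ b ∧ ¬ b ≤ a
  symm := ⟨fun _ _ h => ⟨h.2, h.1⟩⟩
  loopless := ⟨fun _ h => h.1 le_rfl⟩

/-- `w` is a (finite) factor of the infinite word `u`. -/
def IsFactor {A : Type*} (u : ℕ → A) (w : List A) : Prop :=
  ∃ p : ℕ, w = (List.range w.length).map fun i => u (p + i)

/-- `u` is uniformly recurrent. -/
def UniformlyRecurrent {A : Type*} (u : ℕ → A) : Prop :=
  ∀ n : ℕ, ∃ m : ℕ, ∀ v w : List A, IsFactor u v → IsFactor u w →
    v.length = n → w.length = m → v <:+: w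

/-- The set of factors of `u` is inexhaustible. -/
def Inexhaustible {A : Type*} (u : ℕ → A) : Prop :=
  ∀ v v' : List A, IsFactor u v → IsFactor u v' → ∃ w : List A, IsFactor u (v ++ w ++ v')

/-- The path on `n` vertices. -/
def pathG (n : ℕ) : SimpleGraph (Fin n) where
  Adj i j := Nat.dist i.val j.val = 1
  symm := ⟨fun i j h => by try dsimp only at h ⊢
                           rwa [Nat.dist_comm]⟩
  loopless := ⟨fun i h => by try dsimp only at h
                             simp [Nat.dist_self] at h⟩

/-- The graph `Ĝ_k` on `ℕ × ℕ`. -/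
def Ghat (k : ℕ) : SimpleGraph (ℕ × ℕ) where
  Adj a b := (a.1 = b.1 ∧ Nat.dist a.2 b.2 = 1) ∨ (a.1 ≠ b.1 ∧ ¬ a.2 ≡ b.2 [MOD k])
  symm := by
    constructor
    intro a b h
    rcases h with ⟨h1, h2⟩ | ⟨h1, h2⟩
    · exact Or.inl ⟨h1.symm, by rwa [Nat.dist_comm]⟩
    · exact Or.inr ⟨h1.symm, fun h => h2 h.symm⟩
  loopless := by
    constructor
    intro a h
    rcases h with ⟨_, h2⟩ | ⟨h1, _⟩
    · simp [Nat.dist_self] at h2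
    · exact h1 rfl

/-- The vertex set of `Q̂_k`. -/
def Qset : Set (ℕ × ℕ) := {p : ℕ × ℕ | p.2 < p.1 + 5}

/-- The graph `Q̂_k`, induced by `Ĝ_k` on `Qset`. -/
def Qhat (k : ℕ) : SimpleGraph Qset := (Ghat k).induce Qset

/-- `M` is a module (autonomous set) of `G`. -/
def IsModule {V : Type*} (G : SimpleGraph V) (M : Set V) : Prop :=
  ∀ v ∉ M, (∀ x ∈ M, G.Adj v x) ∨ (∀ x ∈ M, ¬ G.Adj v x)

/-- A trivial subset of a vertex set: empty, a singleton, or everything. -/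
def IsTrivialSet {V : Type*} (M : Set V) : Prop :=
  M = ∅ ∨ (∃ v, M = {v}) ∨ M = Set.univ

/-- The graph `Ĝ_{u,⊕}` associated with the word `u : ℕ → Bool` and the Boolean sum. -/
def GhatXor (u : ℕ → Bool) : SimpleGraph (ℕ × ℕ) where
  Adj a b := (a.1 = b.1 ∧ Nat.dist a.2 b.2 = 1) ∨ (a.1 ≠ b.1 ∧ u a.2 ≠ u b.2)
  symm := by
    constructor
    intro a b h
    rcases h with ⟨h1, h2⟩ | ⟨h1, h2⟩
    · exact Or.inl ⟨h1.symm, by rwa [Nat.dist_comm]⟩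
    · exact Or.inr ⟨h1.symm, h2.symm⟩
  loopless := by
    constructor
    intro a h
    rcases h with ⟨_, h2⟩ | ⟨h1, _⟩
    · simp [Nat.dist_self] at h2
    · exact h1 rfl

/-- The graph `Ĝ_{u,π₂}` associated with the word `u : ℕ → Bool` and the second projection. -/
def GhatPi2 (u : ℕ → Bool) : SimpleGraph (ℕ × ℕ) where
  Adj a b := (a.1 = b.1 ∧ Nat.dist a.2 b.2 = 1) ∨
    (a.1 < b.1 ∧ u b.2 = true) ∨ (b.1 < a.1 ∧ u a.2 = true)
  symm := by
    constructor
    intro a b h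
    rcases h with ⟨h1, h2⟩ | ⟨h1, h2⟩ | ⟨h1, h2⟩
    · exact Or.inl ⟨h1.symm, by rwa [Nat.dist_comm]⟩
    · exact Or.inr (Or.inr ⟨h1, h2⟩)
    · exact Or.inr (Or.inl ⟨h1, h2⟩)
  loopless := by
    constructor
    intro a h
    rcases h with ⟨_, h2⟩ | ⟨h1, _⟩ | ⟨h1, _⟩
    · simp [Nat.dist_self] at h2
    · exact lt_irrefl _ h1
    · exact lt_irrefl _ h1

/-- `u` has a constant factor of length `m`. -/
def HasConstFactor (u : ℕ → Bool) (m : ℕ) : Prop :=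
  ∃ p : ℕ, ∀ i < m, u (p + i) = u p

/-!
Fix a factor `w` of `u` outside `B`. Since `B` is infinite, downward closed and `A` is finite, `B`
contains arbitrarily long factors, none of which contains `w`. By inexhaustibility such a factor
`b` sits inside a factor `w ++ x ++ b ++ y ++ w`, so two consecutive occurrences of `w` in `u` lie
far apart, and the factor between them is a long complete return word to `w` (a word with exactly
two occurrences of `w`, as prefix and as suffix). Complete return words to `w` of different
lengths are incomparable for the factor order, so they form an infinite antichain.
-/

section ReturnWords

variable {α : Type*}

/-- `w` occurs in `r` only as a prefix and as a suffix. -/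
structure IsCompleteReturnWord (w r : List α) : Prop where
  isPrefix : w <+: r
  isSuffix : w <:+ r
  length_lt : w.length < r.length
  eq_nil_or_eq_nil : ∀ s t, r = s ++ w ++ t → s = [] ∨ t = []

theorem IsCompleteReturnWord.not_infix {w r r' : List α} (hr : IsCompleteReturnWord w r)
    (hr' : IsCompleteReturnWord w r') (hlt : r.length < r'.length) : ¬ r <:+: r' := by
  rintro ⟨s, t, rfl⟩
  obtain ⟨r₁, hr₁⟩ := hr.isPrefix
  obtain ⟨r₂, hr₂⟩ := hr.isSuffix
  have hr₁ne : r₁ ≠ [] := by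
    rintro rfl
    simpa [← hr₁] using hr.length_lt
  have hr₂ne : r₂ ≠ [] := by
    rintro rfl
    simpa [← hr₂] using hr.length_lt
  have hs : s = [] := by
    refine (hr'.eq_nil_or_eq_nil s (r₁ ++ t) (by simp [← hr₁])).resolve_right ?_
    simp [hr₁ne]
  have ht : t = [] := by
    refine (hr'.eq_nil_or_eq_nil (s ++ r₂) t (by simp [← hr₂])).resolve_left ?_
    simp [hr₂ne]
  simp [hs, ht] at hlt

theorem exists_antichain_of_unbounded_length {S : Set (List α)}
    (hS : ∀ r ∈ S, ∀ r' ∈ S, r.length < r'.length → ¬ r <:+: r')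
    (hunb : ∀ n, ∃ r ∈ S, n ≤ r.length) :
    ∃ f : ℕ → List α, (∀ i, f i ∈ S) ∧ ∀ i j, i ≠ j → ¬ f i <:+: f j := by
  have hinf : (List.length '' S).Infinite := Set.infinite_of_forall_exists_gt fun n =>
    let ⟨r, hr, hn⟩ := hunb (n + 1)
    ⟨r.length, ⟨r, hr, rfl⟩, hn⟩
  choose f hfS hflen using fun i => (hinf.natEmbedding _ i).2
  refine ⟨f, hfS, fun i j hij hinfix => ?_⟩
  have hne : (f i).length ≠ (f j).length := by
    rw [hflen, hflen]
    exact fun h => hij ((hinf.natEmbedding _).injective (Subtype.ext h))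
  rcases hne.lt_or_gt with h | h
  · exact hS _ (hfS i) _ (hfS j) h hinfix
  · exact hinfix.length_le.not_gt h

theorem Set.Infinite.exists_le_length [Finite α] {S : Set (List α)} (hS : S.Infinite) (n : ℕ) :
    ∃ b ∈ S, n ≤ b.length := by
  by_contra! h
  exact hS ((List.finite_length_lt α n).subset h)

-- `q` is the last point of `P` up to `s`, and `q + d` the first one from `s + n` on.
theorem Nat.exists_consecutive_of_gap {P : ℕ → Prop} {a c s n : ℕ} (ha : P a) (has : a ≤ s)
    (hc : P c) (hsc : s + n ≤ c) (hgap : ∀ t, s ≤ t → t < s + n → ¬ P t) :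
    ∃ q d, n ≤ d ∧ P q ∧ P (q + d) ∧ ∀ t, q < t → t < q + d → ¬ P t := by
  classical
  have hnext : ∃ k, P (s + n + k) := ⟨c - (s + n), by rwa [Nat.add_sub_cancel' hsc]⟩
  have hq : P (Nat.findGreatest P s) := Nat.findGreatest_spec has ha
  have hqs : Nat.findGreatest P s ≤ s := Nat.findGreatest_le s
  have hgreatest : ∀ t, Nat.findGreatest P s < t → t ≤ s → ¬ P t :=
    fun _ => Nat.findGreatest_is_greatest
  generalize Nat.findGreatest P s = q at hq hqs hgreatest
  refine ⟨q, s + n + Nat.find hnext - q, by omega, hq, ?_, fun t hqt htr ht => ?_⟩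
  · rw [Nat.add_sub_cancel' (by omega)]
    exact Nat.find_spec hnext
  rcases le_or_gt t s with hts | hst
  · exact hgreatest t hqt hts ht
  rcases lt_or_ge t (s + n) with htn | htn
  · exact hgap t hst.le htn ht
  · exact Nat.find_min hnext (m := t - (s + n)) (by omega) (by rwa [Nat.add_sub_cancel' htn])

def factorAt (u : ℕ → α) (p n : ℕ) : List α := (List.range n).map fun i => u (p + i)

section FactorAt

variable {u : ℕ → α}

@[simp]
theorem length_factorAt (u : ℕ → α) (p n : ℕ) : (factorAt u p n).length = n := by
  simp [factorAt]

theorem isFactor_factorAt (u : ℕ → α) (p n : ℕ) : IsFactor u (factorAt u p n) :=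
  ⟨p, by rw [length_factorAt]; rfl⟩

theorem factorAt_add (u : ℕ → α) (p m n : ℕ) :
    factorAt u p (m + n) = factorAt u p m ++ factorAt u (p + m) n := by
  simp only [factorAt, List.range_add, List.map_append, List.map_map]
  congr 1
  exact List.map_congr_left fun i _ => by simp [Nat.add_assoc]

theorem factorAt_eq_of_append_append_eq {l₁ v l₂ : List α} {p m : ℕ}
    (h : l₁ ++ v ++ l₂ = factorAt u p m) : factorAt u (p + l₁.length) v.length = v := by
  have hm : m = l₁.length + v.length + l₂.length := by
    have := congrArg List.length h
    simp only [List.length_append, length_factorAt] at this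
    omega
  rw [hm, factorAt_add, factorAt_add] at h
  obtain ⟨h₁v, -⟩ := List.append_inj h (by simp)
  exact (List.append_inj h₁v (by simp)).2.symm

theorem factorAt_infix_factorAt {s t m L : ℕ} (hst : s ≤ t) (htL : t + m ≤ s + L) :
    factorAt u t m <:+: factorAt u s L := by
  obtain ⟨i, rfl⟩ := Nat.exists_eq_add_of_le hst
  obtain ⟨j, rfl⟩ : ∃ j, L = i + m + j := ⟨L - (i + m), by omega⟩
  rw [factorAt_add, factorAt_add]
  exact ⟨_, _, rfl⟩

theorem isCompleteReturnWord_factorAt {w : List α} {q d : ℕ} (hd : 0 < d)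
    (hq : factorAt u q w.length = w) (hqd : factorAt u (q + d) w.length = w)
    (hbetween : ∀ t, q < t → t < q + d → factorAt u t w.length ≠ w) :
    IsCompleteReturnWord w (factorAt u q (d + w.length)) where
  isPrefix := ⟨factorAt u (q + w.length) d, by rw [Nat.add_comm d, factorAt_add, hq]⟩
  isSuffix := ⟨factorAt u q d, by rw [factorAt_add, hqd]⟩
  length_lt := by simpa
  eq_nil_or_eq_nil s t h := by
    have hocc : factorAt u (q + s.length) w.length = w := factorAt_eq_of_append_append_eq h.symm
    have hlen : s.length + t.length = d := by
      have := congrArg List.length h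
      simp only [List.length_append, length_factorAt] at this
      omega
    by_contra! hst
    have hs := List.length_pos_of_ne_nil hst.1
    have ht := List.length_pos_of_ne_nil hst.2
    exact hbetween _ (by omega) (by omega) hocc

end FactorAt

theorem Inexhaustible.exists_isCompleteReturnWord {u : ℕ → α} (hin : Inexhaustible u)
    {w b : List α} (hw : IsFactor u w) (hb : IsFactor u b) (hfree : ¬ w <:+: b) {n : ℕ}
    (hlen : n + w.length < b.length) :
    ∃ r, IsFactor u r ∧ IsCompleteReturnWord w r ∧ n ≤ r.length := by
  obtain ⟨x, hx⟩ := hin w b hw hb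
  obtain ⟨y, p, hp⟩ := hin _ w hx hw
  have hp : w ++ x ++ b ++ y ++ w = factorAt u p _ := hp
  have hfirst : factorAt u p w.length = w := by
    simpa using
      factorAt_eq_of_append_append_eq (l₁ := []) (l₂ := x ++ b ++ y ++ w) (by simpa using hp)
  have hb' : factorAt u (p + (w ++ x).length) b.length = b :=
    factorAt_eq_of_append_append_eq (l₂ := y ++ w) (by simpa using hp)
  have hlast : factorAt u (p + (w ++ x ++ b ++ y).length) w.length = w :=
    factorAt_eq_of_append_append_eq (l₂ := []) (by simpa using hp)
  have hinside : ∀ t, p + (w ++ x).length ≤ t → t < p + (w ++ x).length + (n + 1) →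
      factorAt u t w.length ≠ w :=
    fun t hst htn ht => hfree (ht ▸ hb' ▸ factorAt_infix_factorAt hst (by omega))
  obtain ⟨q, d, hnd, hq, hqd, hbetween⟩ :=
    Nat.exists_consecutive_of_gap (P := fun t => factorAt u t w.length = w) hfirst (by simp) hlast
      (by simp only [List.length_append]; omega) hinside
  exact ⟨_, isFactor_factorAt u q (d + w.length),
    isCompleteReturnWord_factorAt (by omega) hq hqd hbetween, by rw [length_factorAt]; omega⟩

end ReturnWords

theorem infinite_proper_initial_segment_yields_antichain
    {A : Type*} [Fintype A] (u : ℕ → A)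
    (hin : Inexhaustible u)
    (B : Set (List A)) (hBsub : B ⊆ {w : List A | IsFactor u w})
    (hBne : B ≠ {w : List A | IsFactor u w})
    (hBinf : B.Infinite)
    (hBdc : ∀ v w : List A, w ∈ B → v <:+: w → v ∈ B) :
    ∃ f : ℕ → List A, (∀ i, IsFactor u (f i)) ∧ ∀ i j, i ≠ j → ¬ f i <:+: f j := by
  obtain ⟨w, hwu, hwB⟩ : ∃ w, IsFactor u w ∧ w ∉ B := by
    by_contra! h
    exact hBne (hBsub.antisymm h)
  obtain ⟨f, hf, hanti⟩ := exists_antichain_of_unbounded_length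
    (S := {r | IsFactor u r ∧ IsCompleteReturnWord w r})
    (fun r hr r' hr' => hr.2.not_infix hr'.2) fun n => by
      obtain ⟨b, hbB, hb⟩ := hBinf.exists_le_length (n + w.length + 1)
      obtain ⟨r, hru, hrw, hrn⟩ :=
        hin.exists_isCompleteReturnWord hwu (hBsub hbB) (fun h => hwB (hBdc w b hbB h)) hb
      exact ⟨r, ⟨hru, hrw⟩, hrn⟩
  exact ⟨f, fun i => (hf i).1, hanti⟩
end

section
/- Let u : ℕ → {0,1} be a uniformly recurrent word that is not constant. Then every induced path of length at least φ(u) in the graph Ĝ_{u,π₂} is contained in a single component: all its vertices have the same first coordinate. -/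
open SimpleGraph

/-!
Let `c` be the lowest component visited by the path, first at `y p`. A vertex in a component
above `c` whose position is marked by `u` is adjacent to `y p`, so only `y (p - 1)` and `y (p + 1)`
can be such vertices. Elsewhere consecutive vertices of the path must share a component, so each of
the stretches `y 0, …, y (p - 2)` and `y (p + 2), …, y n` stays in one component. If it is above
`c`, its vertices sit at distinct, consecutive, unmarked positions: a constant factor of `u`, hence
at most `l` of them. If it is `c` itself, its vertices are adjacent to a marked vertex, which leaves
room for only one. Thus a path leaving its component has length at most `2 l + 2`.
-/

theorem Nat.eq_add_or_add_eq_of_dist_succ_eq_one (g : ℕ → ℕ) (N : ℕ)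
    (hstep : ∀ k < N, Nat.dist (g k) (g (k + 1)) = 1) (hinj : Set.InjOn g (Set.Iic N)) :
    (∀ k ≤ N, g k = g 0 + k) ∨ (∀ k ≤ N, g k + k = g 0) := by
  induction N with
  | zero => exact Or.inl fun k hk => by simp [Nat.le_zero.mp hk]
  | succ N ih =>
    have hN : Nat.dist (g N) (g (N + 1)) = 1 := hstep N N.lt_succ_self
    unfold Nat.dist at hN
    rcases Nat.eq_zero_or_pos N with rfl | hN0
    · rw [Nat.zero_add] at hN
      rcases (show g 1 = g 0 + 1 ∨ g 1 + 1 = g 0 by omega) with h1 | h1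
      · exact Or.inl fun k hk => by interval_cases k <;> omega
      · exact Or.inr fun k hk => by interval_cases k <;> omega
    -- the walk cannot turn back, since `g (N + 1) = g (N - 1)` would contradict injectivity
    have hback : g (N + 1) ≠ g (N - 1) := fun he => by
      have := hinj (Set.mem_Iic.mpr le_rfl) (Set.mem_Iic.mpr (by omega)) he
      omega
    rcases ih (fun k hk => hstep k (by omega)) (hinj.mono (Set.Iic_subset_Iic.mpr N.le_succ))
      with h | h
    · have := h N le_rfl; have := h (N - 1) (by omega)
      refine Or.inl fun k hk => ?_
      rcases Nat.le_add_one_iff.mp hk with hk | rfl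
      exacts [h k hk, by omega]
    · have := h N le_rfl; have := h (N - 1) (by omega)
      refine Or.inr fun k hk => ?_
      rcases Nat.le_add_one_iff.mp hk with hk | rfl
      exacts [h k hk, by omega]

theorem hasConstFactor_one (u : ℕ → Bool) : HasConstFactor u 1 :=
  ⟨0, fun i hi => by rw [Nat.lt_one_iff.mp hi, Nat.add_zero]⟩

theorem hasConstFactor_of_dist_succ_eq_one {u : ℕ → Bool} (g : ℕ → ℕ) (N : ℕ)
    (hstep : ∀ k < N, Nat.dist (g k) (g (k + 1)) = 1) (hinj : Set.InjOn g (Set.Iic N))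
    (hu : ∀ k ≤ N, u (g k) = u (g 0)) : HasConstFactor u (N + 1) := by
  rcases Nat.eq_add_or_add_eq_of_dist_succ_eq_one g N hstep hinj with h | h
  · refine ⟨g 0, fun i hi => ?_⟩
    rw [← h i (by omega), hu i (by omega)]
  · refine ⟨g N, fun i hi => ?_⟩
    have h₁ := h (N - i) (by omega)
    have h₂ := h N le_rfl
    rw [show g N + i = g (N - i) by omega, hu (N - i) (by omega), hu N le_rfl]

theorem GhatPi2_adj_iff {u : ℕ → Bool} {a b : ℕ × ℕ} :
    (GhatPi2 u).Adj a b ↔ (a.1 = b.1 ∧ Nat.dist a.2 b.2 = 1) ∨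
      (a.1 < b.1 ∧ u b.2 = true) ∨ (b.1 < a.1 ∧ u a.2 = true) :=
  Iff.rfl

/-- `IsInducedPath` reindexed by `ℕ`, so that index arithmetic carries no bound proofs. -/
def IsInducedPathUpTo {V : Type*} (G : SimpleGraph V) (y : ℕ → V) (n : ℕ) : Prop :=
  Set.InjOn y (Set.Iic n) ∧ ∀ i ≤ n, ∀ j ≤ n, G.Adj (y i) (y j) ↔ Nat.dist i j = 1

theorem IsInducedPath.isInducedPathUpTo {V : Type*} {G : SimpleGraph V} {n : ℕ}
    {x : Fin (n + 1) → V} (hx : IsInducedPath G x) :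
    IsInducedPathUpTo G (fun k => x (Fin.ofNat (n + 1) k)) n := by
  have hval : ∀ k ≤ n, (Fin.ofNat (n + 1) k).val = k := fun k hk => by
    rw [Fin.val_ofNat, Nat.mod_eq_of_lt (Nat.lt_succ_of_le hk)]
  refine ⟨fun i hi j hj he => ?_, fun i hi j hj => ?_⟩
  · rw [← hval i hi, ← hval j hj, hx.1 he]
  · rw [hx.2, hval i hi, hval j hj]

theorem IsInducedPathUpTo.reverse {V : Type*} {G : SimpleGraph V} {y : ℕ → V} {n : ℕ}
    (hy : IsInducedPathUpTo G y n) : IsInducedPathUpTo G (fun k => y (n - k)) n := by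
  refine ⟨fun i hi j hj he => ?_, fun i hi j hj => ?_⟩
  · have := hy.1 (Set.mem_Iic.mpr (Nat.sub_le n i)) (Set.mem_Iic.mpr (Nat.sub_le n j)) he
    simp only [Set.mem_Iic] at hi hj
    omega
  · rw [hy.2 _ (Nat.sub_le n i) _ (Nat.sub_le n j)]
    unfold Nat.dist
    omega

/-- A vertex of `GhatPi2 u` with this property is adjacent to every vertex in a component `≤ c`. -/
def MarkedAbove (u : ℕ → Bool) (c : ℕ) (v : ℕ × ℕ) : Prop :=
  c < v.1 ∧ u v.2 = true

namespace IsInducedPathUpTo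

variable {u : ℕ → Bool} {y : ℕ → ℕ × ℕ} {n c l : ℕ}

theorem dist_eq_one_of_markedAbove (hy : IsInducedPathUpTo (GhatPi2 u) y n) {i k : ℕ}
    (hi : i ≤ n) (hk : k ≤ n) (hic : (y i).1 ≤ c) (hmk : MarkedAbove u c (y k)) :
    Nat.dist i k = 1 :=
  (hy.2 i hi k hk).1 (Or.inr (Or.inl ⟨hic.trans_lt hmk.1, hmk.2⟩))

theorem succ_fst_eq_or_markedAbove (hy : IsInducedPathUpTo (GhatPi2 u) y n)
    (hc : ∀ k ≤ n, c ≤ (y k).1) {k : ℕ} (hk : k < n) :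
    ((y k).1 = (y (k + 1)).1 ∧ Nat.dist (y k).2 (y (k + 1)).2 = 1) ∨
      MarkedAbove u c (y k) ∨ MarkedAbove u c (y (k + 1)) := by
  have hadj : (GhatPi2 u).Adj (y k) (y (k + 1)) :=
    (hy.2 k hk.le (k + 1) hk).2 (by unfold Nat.dist; omega)
  rcases GhatPi2_adj_iff.mp hadj with h | ⟨hlt, hu⟩ | ⟨hlt, hu⟩
  · exact Or.inl h
  · exact Or.inr (Or.inr ⟨(hc k hk.le).trans_lt hlt, hu⟩)
  · exact Or.inr (Or.inl ⟨(hc (k + 1) hk).trans_lt hlt, hu⟩)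

theorem fst_eq_of_not_markedAbove (hy : IsInducedPathUpTo (GhatPi2 u) y n)
    (hc : ∀ k ≤ n, c ≤ (y k).1) {a b : ℕ} (hbn : b ≤ n)
    (hcold : ∀ k, a ≤ k → k ≤ b → ¬ MarkedAbove u c (y k)) :
    ∀ k, a ≤ k → k ≤ b → (y k).1 = (y a).1 := by
  intro k hak
  induction k, hak using Nat.le_induction with
  | base => exact fun _ => rfl
  | succ k hak ih =>
    intro hkb
    rcases hy.succ_fst_eq_or_markedAbove hc (k := k) (by omega) with h | h | h
    · exact h.1.symm.trans (ih (by omega))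
    · exact absurd h (hcold k hak (by omega))
    · exact absurd h (hcold (k + 1) (by omega) hkb)

theorem exists_markedAbove (hy : IsInducedPathUpTo (GhatPi2 u) y n)
    (hc : ∀ k ≤ n, c ≤ (y k).1) (hne : ∃ i ≤ n, (y i).1 ≠ (y 0).1) :
    ∃ k ≤ n, MarkedAbove u c (y k) := by
  by_contra! hcold
  obtain ⟨i, hi, hne⟩ := hne
  exact hne (hy.fst_eq_of_not_markedAbove hc le_rfl (fun k _ hk => hcold k hk) i i.zero_le hi)

/-- Off component `c`, a stretch without marked vertices runs inside one component along
unmarked positions, which spell a constant factor of `u`. -/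
theorem fst_eq_or_le_of_not_markedAbove (hy : IsInducedPathUpTo (GhatPi2 u) y n)
    (hlmax : ∀ m, HasConstFactor u m → m ≤ l) (hc : ∀ k ≤ n, c ≤ (y k).1) {a b : ℕ}
    (hab : a ≤ b) (hbn : b ≤ n) (hcold : ∀ k, a ≤ k → k ≤ b → ¬ MarkedAbove u c (y k)) :
    (∀ k, a ≤ k → k ≤ b → (y k).1 = c) ∨ b + 1 - a ≤ l := by
  have hcol := hy.fst_eq_of_not_markedAbove hc hbn hcold
  by_cases hac : (y a).1 = c
  · exact Or.inl fun k hak hkb => (hcol k hak hkb).trans hac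
  right
  have hca : c < (y a).1 := lt_of_le_of_ne (hc a (by omega)) (Ne.symm hac)
  have hunmarked : ∀ j ≤ b - a, u (y (a + j)).2 = false := fun j hj => by
    rw [Bool.eq_false_iff]
    exact fun hu => hcold (a + j) (by omega) (by omega)
      ⟨hca.trans_eq (hcol _ (by omega) (by omega)).symm, hu⟩
  have hstep : ∀ j < b - a, Nat.dist (y (a + j)).2 (y (a + j + 1)).2 = 1 := fun j hj => by
    rcases hy.succ_fst_eq_or_markedAbove hc (k := a + j) (by omega) with h | h | h
    · exact h.2
    · exact absurd h (hcold _ (by omega) (by omega))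
    · exact absurd h (hcold _ (by omega) (by omega))
  have hinj : Set.InjOn (fun j => (y (a + j)).2) (Set.Iic (b - a)) := fun i hi j hj he => by
    simp only [Set.mem_Iic] at hi hj
    have hfst : (y (a + i)).1 = (y (a + j)).1 :=
      (hcol _ (by omega) (by omega)).trans (hcol _ (by omega) (by omega)).symm
    have := hy.1 (Set.mem_Iic.mpr (by omega)) (Set.mem_Iic.mpr (by omega)) (Prod.ext hfst he)
    omega
  have := hlmax _ (hasConstFactor_of_dist_succ_eq_one _ (b - a) hstep hinj
    fun j hj => (hunmarked j hj).trans (hunmarked 0 (Nat.zero_le _)).symm)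
  omega

theorem sub_one_le_of_fst_min (hy : IsInducedPathUpTo (GhatPi2 u) y n)
    (hlmax : ∀ m, HasConstFactor u m → m ≤ l) {p : ℕ} (hp : p ≤ n)
    (hmin : ∀ k ≤ n, (y p).1 ≤ (y k).1) (hmarked : ∃ k ≤ n, MarkedAbove u (y p).1 (y k)) :
    p - 1 ≤ l := by
  have hl : 1 ≤ l := hlmax 1 (hasConstFactor_one u)
  have hnear : ∀ k ≤ n, MarkedAbove u (y p).1 (y k) → Nat.dist p k = 1 :=
    fun k hk => hy.dist_eq_one_of_markedAbove hp hk le_rfl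
  obtain ⟨h, hhn, hh⟩ := hmarked
  have hph := hnear h hhn hh
  rcases Nat.lt_or_ge p 2 with hp2 | hp2
  · omega
  have hcold : ∀ k, 0 ≤ k → k ≤ p - 2 → ¬ MarkedAbove u (y p).1 (y k) := fun k _ hk hmk => by
    have := hnear k (by omega) hmk
    unfold Nat.dist at this
    omega
  rcases hy.fst_eq_or_le_of_not_markedAbove hlmax hmin (Nat.zero_le _) (by omega) hcold
    with h0 | hle
  · -- `y 0` is adjacent to `y h`, which forces `h = 1` and `p = 2`
    have := hy.dist_eq_one_of_markedAbove (Nat.zero_le n) hhn (h0 0 le_rfl (Nat.zero_le _)).le hh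
    unfold Nat.dist at this hph
    omega
  · omega

theorem le_two_mul_add_two_of_fst_ne (hy : IsInducedPathUpTo (GhatPi2 u) y n)
    (hlmax : ∀ m, HasConstFactor u m → m ≤ l) (hne : ∃ i ≤ n, (y i).1 ≠ (y 0).1) :
    n ≤ 2 * l + 2 := by
  obtain ⟨p, hp, hmin⟩ := Finset.exists_min_image (Finset.range (n + 1)) (fun k => (y k).1)
    ⟨0, Finset.mem_range.mpr n.succ_pos⟩
  replace hp : p ≤ n := Nat.lt_succ_iff.mp (Finset.mem_range.mp hp)
  replace hmin : ∀ k ≤ n, (y p).1 ≤ (y k).1 :=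
    fun k hk => hmin k (Finset.mem_range.mpr (Nat.lt_succ_of_le hk))
  obtain ⟨h, hhn, hh⟩ := hy.exists_markedAbove hmin hne
  have hleft := hy.sub_one_le_of_fst_min hlmax hp hmin ⟨h, hhn, hh⟩
  have hpp : n - (n - p) = p := Nat.sub_sub_self hp
  have hright := hy.reverse.sub_one_le_of_fst_min hlmax (Nat.sub_le n p)
    (fun k hk => by simpa only [hpp] using hmin (n - k) (Nat.sub_le n k))
    ⟨n - h, Nat.sub_le n h, by simpa only [hpp, Nat.sub_sub_self hhn] using hh⟩
  omega

end IsInducedPathUpTo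

theorem long_induced_path_in_GhatPi2_in_one_component_general
    (u : ℕ → Bool)
    (l : ℕ) (hlmax : ∀ m, HasConstFactor u m → m ≤ l)
    {n : ℕ} (hn : (if l = 1 then 6 else 2 * (l + 1) + 1) ≤ n)
    (x : Fin (n + 1) → ℕ × ℕ) (hx : IsInducedPath (GhatPi2 u) x) :
    ∀ i j : Fin (n + 1), (x i).1 = (x j).1 := by
  have hn' : 2 * l + 3 ≤ n := by split_ifs at hn <;> omega
  suffices hcol : ∀ i : Fin (n + 1), (x i).1 = (x 0).1 from
    fun i j => (hcol i).trans (hcol j).symm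
  by_contra! ⟨i, hi⟩
  have := hx.isInducedPathUpTo.le_two_mul_add_two_of_fst_ne hlmax
    ⟨i, Nat.lt_succ_iff.mp i.isLt,
      by simpa only [Fin.ofNat_eq_cast, Fin.cast_val_eq_self, Fin.natCast_zero] using hi⟩
  omega

theorem long_induced_path_in_GhatPi2_in_one_component
    (u : ℕ → Bool) (hur : UniformlyRecurrent u) (hnc : ∃ m n : ℕ, u m ≠ u n)
    (l : ℕ) (hl : HasConstFactor u l) (hlmax : ∀ m, HasConstFactor u m → m ≤ l)
    {n : ℕ} (hn : (if l = 1 then 6 else 2 * (l + 1) + 1) ≤ n)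
    (x : Fin (n + 1) → ℕ × ℕ) (hx : IsInducedPath (GhatPi2 u) x) :
    ∀ i j : Fin (n + 1), (x i).1 = (x j).1 :=
  long_induced_path_in_GhatPi2_in_one_component_general u l hlmax hn x hx
end

section
/- Let G be a simple graph. The supremum of the diameters of the connected components of G is infinite — i.e., for every n ∈ ℕ there are two vertices in a common connected component at graph distance at least n — if and only if there is a family (A_n)_{n ∈ ℕ} of pairwise disjoint finite subsets of the vertex set of G, with no edge of G between distinct A_n, such that each induced subgraph G↾A_n is a path of length at least n that is isometric in G. -/
open SimpleGraph

/-!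
Split a long geodesic from `a` into blocks: a vertex `s` can only be equal or adjacent to geodesic
vertices whose index is within one of `dist a s`, so for a finite set `S` one of `#S + 1` blocks
stays away from `S`. Stretches of geodesics are isometric paths, so when component diameters are
unbounded the paths can be chosen greedily, each avoiding the closed neighbourhood of the earlier
ones. Conversely, the endpoints of an isometric path of length `m` are at distance `m`.
-/

namespace SimpleGraph

variable {V : Type*} {G : SimpleGraph V}

lemma Walk.dist_getVert_getVert_of_length_eq_dist {u v : V} {p : G.Walk u v}
    (hp : p.length = G.dist u v) {i j : ℕ} (hij : i ≤ j) (hj : j ≤ p.length) :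
    G.dist (p.getVert i) (p.getVert j) = j - i := by
  have hsub : ((p.drop i).take (j - i)).IsSubwalk p :=
    (isSubwalk_take _ _).trans (isSubwalk_drop _ _)
  have := length_eq_dist_of_subwalk hp hsub
  rw [take_length, drop_length, drop_getVert, Nat.add_sub_cancel' hij] at this
  omega

lemma Walk.dist_getVert_getVert_eq_natDist_of_length_eq_dist {u v : V} {p : G.Walk u v}
    (hp : p.length = G.dist u v) {i j : ℕ} (hi : i ≤ p.length) (hj : j ≤ p.length) :
    G.dist (p.getVert i) (p.getVert j) = Nat.dist i j := by
  rcases le_total i j with hij | hji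
  · rw [p.dist_getVert_getVert_of_length_eq_dist hp hij hj, Nat.dist_eq_sub_of_le hij]
  · rw [dist_comm, p.dist_getVert_getVert_of_length_eq_dist hp hji hi,
      Nat.dist_eq_sub_of_le_right hji]

lemma dist_le_dist_add_one_of_adj_or_eq {a s y : V} (h : G.Adj s y ∨ s = y) :
    G.dist a y ≤ G.dist a s + 1 ∧ G.dist a s ≤ G.dist a y + 1 := by
  rcases h with hadj | rfl
  · rcases hadj.diff_dist_adj (u := a) with h | h | h <;> omega
  · omega

open Finset in
lemma Walk.exists_window_far_from {a b : V} {p : G.Walk a b} (hp : p.length = G.dist a b)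
    (S : Finset V) (ℓ : ℕ) (hL : (#S + 1) * (ℓ + 3) ≤ p.length) :
    ∃ w, w + ℓ ≤ p.length ∧
      ∀ k ≤ ℓ, ∀ s ∈ S, s ≠ p.getVert (w + k) ∧ ¬ G.Adj s (p.getVert (w + k)) := by
  classical
  -- Block `t` has indices `t * (ℓ + 3) + 1, …, t * (ℓ + 3) + ℓ + 1`; a vertex `s` can only be
  -- close to block `dist a s / (ℓ + 3)`.
  have hcard : #(S.image fun s => G.dist a s / (ℓ + 3)) < #(range (#S + 1)) := by
    rw [card_range]
    exact Nat.lt_succ_of_le card_image_le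
  obtain ⟨t, ht, htS⟩ := exists_mem_notMem_of_card_lt_card hcard
  rw [mem_range] at ht
  have hblock : t * (ℓ + 3) + (ℓ + 3) ≤ p.length :=
    (add_one_mul t (ℓ + 3)).symm.trans_le ((Nat.mul_le_mul_right _ ht).trans hL)
  refine ⟨t * (ℓ + 3) + 1, by omega, fun k hk s hs => ?_⟩
  set i := t * (ℓ + 3) + 1 + k
  have hdist : G.dist a (p.getVert i) = i := by
    simpa using p.dist_getVert_getVert_of_length_eq_dist hp (Nat.zero_le i) (by omega)
  have hfar : ¬ (G.Adj s (p.getVert i) ∨ s = p.getVert i) := by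
    intro hclose
    have := dist_le_dist_add_one_of_adj_or_eq (a := a) hclose
    exact htS <| mem_image.mpr
      ⟨s, hs, Nat.div_eq_of_lt_le (by omega) (by rw [add_one_mul]; omega)⟩
  tauto

lemma exists_isometric_path_far_from {a b : V} (S : Finset V) (ℓ : ℕ)
    (hab : (S.card + 1) * (ℓ + 3) ≤ G.dist a b) :
    ∃ x : Fin (ℓ + 1) → V, (∀ i j, G.dist (x i) (x j) = Nat.dist i.val j.val) ∧
      ∀ s ∈ S, ∀ i, s ≠ x i ∧ ¬ G.Adj s (x i) := by
  obtain ⟨p, hp⟩ := exists_walk_of_dist_ne_zero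
    ((Nat.mul_pos (Nat.succ_pos _) (Nat.succ_pos _)).trans_le hab).ne'
  obtain ⟨w, hw, hfar⟩ := p.exists_window_far_from hp S ℓ (hp ▸ hab)
  refine ⟨fun i => p.getVert (w + i), fun i j => ?_, fun s hs i => hfar i (by omega) s hs⟩
  rw [p.dist_getVert_getVert_eq_natDist_of_length_eq_dist hp (by omega) (by omega)]
  simp only [Nat.dist, Nat.add_sub_add_left]

end SimpleGraph

lemma isIsometricPathOn_range {V : Type*} {G : SimpleGraph V} {n : ℕ} {x : Fin (n + 1) → V}
    (hx : ∀ i j, G.dist (x i) (x j) = Nat.dist i.val j.val) :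
    IsIsometricPathOn G (Set.range x) n := by
  refine ⟨x, fun i j hij => ?_, rfl, fun i j => ?_, hx⟩
  · have := hx i j
    rw [hij, dist_self] at this
    exact Fin.ext (Nat.eq_of_dist_eq_zero this.symm)
  · rw [← dist_eq_one_iff_adj, hx]

lemma IsIsometricPathOn.exists_reachable_dist_eq {V : Type*} {G : SimpleGraph V} {A : Set V}
    {n : ℕ} (h : IsIsometricPathOn G A n) : ∃ a b, G.Reachable a b ∧ G.dist a b = n := by
  obtain ⟨x, -, -, -, hx⟩ := h
  have hend : G.dist (x 0) (x (Fin.last n)) = n := by simp [hx, Nat.dist]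
  rcases n.eq_zero_or_pos with rfl | hn
  · exact ⟨x 0, x 0, .refl _, by simp⟩
  · exact ⟨_, _, Reachable.of_dist_ne_zero (by omega), hend⟩

theorem exists_seq_pairwise_of_forall_finset {α : Type*} {R : α → α → Prop}
    (hR : ∀ x y, R x y → R y x)
    (P : ℕ → Finset α → Prop)
    (h : ∀ (S : Finset α) n, ∃ A, P n A ∧ ∀ x ∈ S, ∀ y ∈ A, R x y) :
    ∃ A : ℕ → Finset α, (∀ n, P n (A n)) ∧
      Pairwise fun m n => ∀ x ∈ A m, ∀ y ∈ A n, R x y := by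
  classical
  choose f hfP hfR using h
  let T : ℕ → Finset α := fun n => Nat.rec ∅ (fun k T => T ∪ f T k) n
  have hT : Monotone T := monotone_nat_of_le_succ fun n => Finset.subset_union_left
  have hsub : ∀ m n, m < n → f (T m) m ⊆ T n := fun m n hmn =>
    Finset.subset_union_right.trans (hT (Nat.succ_le_of_lt hmn))
  have hlt : ∀ m n, m < n → ∀ x ∈ f (T m) m, ∀ y ∈ f (T n) n, R x y :=
    fun m n hmn x hx y hy => hfR _ _ x (hsub m n hmn hx) y hy
  refine ⟨fun n => f (T n) n, fun n => hfP _ _, fun m n hmn x hx y hy => ?_⟩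
  rcases hmn.lt_or_gt with h | h
  · exact hlt m n h x hx y hy
  · exact hR y x (hlt n m h y hy x hx)

theorem unbounded_component_diameters_iff_direct_sum_of_isometric_paths
    {V : Type*} (G : SimpleGraph V) :
    (∀ n : ℕ, ∃ a b : V, G.Reachable a b ∧ n ≤ G.dist a b) ↔
      ∃ A : ℕ → Set V, (∀ n, (A n).Finite) ∧
        (∀ m n, m ≠ n → Disjoint (A m) (A n)) ∧
        (∀ m n, m ≠ n → ∀ x ∈ A m, ∀ y ∈ A n, ¬ G.Adj x y) ∧
        ∀ n, ∃ m, n ≤ m ∧ IsIsometricPathOn G (A n) m := by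
  classical
  constructor
  · intro H
    have hsep : ∀ x y : V, x ≠ y ∧ ¬ G.Adj x y → y ≠ x ∧ ¬ G.Adj y x :=
      fun x y h => ⟨h.1.symm, fun hyx => h.2 hyx.symm⟩
    obtain ⟨A, hpath, hA⟩ := exists_seq_pairwise_of_forall_finset hsep
      (fun n A => IsIsometricPathOn G (A : Set V) n) fun S n => by
        obtain ⟨a, b, -, hab⟩ := H ((S.card + 1) * (n + 3))
        obtain ⟨x, hx, hfar⟩ := exists_isometric_path_far_from S n hab
        exact ⟨Finset.univ.image x, by simpa using isIsometricPathOn_range hx,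
          by simpa using hfar⟩
    refine ⟨fun n => A n, fun n => (A n).finite_toSet, fun m n hmn => ?_,
      fun m n hmn x hx y hy => (hA hmn x hx y hy).2, fun n => ⟨n, le_rfl, hpath n⟩⟩
    exact Set.disjoint_left.mpr fun x hxm hxn => (hA hmn x hxm x hxn).1 rfl
  · rintro ⟨A, -, -, -, hpath⟩ n
    obtain ⟨m, hnm, hA⟩ := hpath n
    obtain ⟨a, b, hab, hdist⟩ := hA.exists_reachable_dist_eq
    exact ⟨a, b, hab, hdist ▸ hnm⟩
end
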